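/- Let d ≥ 1 and 0 < η < 1. There exists a constant C = C(d,η) such that for every measurable h : ℝ^{d+1} → ℝ whose uncentered parabolic maximal function M̂h is finite at every point of ℝ^{d+1}, one has M̂[(M̂h)^η](z) ≤ C (M̂h(z))^η for every z ∈ ℝ^{d+1}. -/

import Mathlib

open MeasureTheory Metric Set ENNReal
open scoped Real ENNReal

noncomputable section

abbrev ESp (d : ℕ) := EuclideanSpace ℝ (Fin d)

/-- The parabolic cylinder `C_r(t,x)`. -/
def pCyl (d : ℕ) (r : ℝ) (z : ℝ × ESp d) : Set (ℝ × ESp d) :=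
  {w | z.1 ≤ w.1 ∧ w.1 ≤ z.1 + r ^ 2 ∧ dist w.2 z.2 ≤ r}

/-- The parabolic Morrey norm `‖·‖_{E_q}` of a nonnegative function on `ℝ^{d+1}`. -/
def morreyE (d : ℕ) (q : ℝ) (F : ℝ × ESp d → ℝ≥0∞) : ℝ≥0∞ :=
  ⨆ (r : ℝ) (_ : 0 < r) (z : ℝ × ESp d),
    ENNReal.ofReal r * ((volume (pCyl d r z))⁻¹ * ∫⁻ w in pCyl d r z, F w ^ q) ^ (1 / q)


/-- The uncentered parabolic maximal function. -/
def hatM (d : ℕ) (F : ℝ × ESp d → ℝ≥0∞) (z : ℝ × ESp d) : ℝ≥0∞ :=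
  ⨆ (ρ : ℝ) (_ : 0 < ρ) (z₀ : ℝ × ESp d) (_ : z ∈ pCyl d ρ z₀),
    (volume (pCyl d ρ z₀))⁻¹ * ∫⁻ w in pCyl d ρ z₀, F w

variable {d : ℕ}

lemma pCyl_eq (r : ℝ) (z : ℝ × ESp d) :
    pCyl d r z = Icc z.1 (z.1 + r ^ 2) ×ˢ closedBall z.2 r := by
  ext w; simp [pCyl, Set.mem_prod, and_assoc]

lemma measurableSet_pCyl (r : ℝ) (z : ℝ × ESp d) : MeasurableSet (pCyl d r z) := by
  rw [pCyl_eq]; exact measurableSet_Icc.prod measurableSet_closedBall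

lemma volume_pCyl {r : ℝ} (hr : 0 ≤ r) (z : ℝ × ESp d) :
    volume (pCyl d r z) = ENNReal.ofReal (r ^ (d + 2)) * volume (ball (0 : ESp d) 1) := by
  rw [pCyl_eq, Measure.volume_eq_prod, Measure.prod_prod, Real.volume_Icc,
    Measure.addHaar_closedBall _ _ hr, finrank_euclideanSpace_fin, add_sub_cancel_left,
    ← mul_assoc, ← ENNReal.ofReal_mul (by positivity)]
  congr 2
  ring

lemma volume_pCyl_pos {r : ℝ} (hr : 0 < r) (z : ℝ × ESp d) : 0 < volume (pCyl d r z) := by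
  rw [volume_pCyl hr.le]
  exact ENNReal.mul_pos (by simp [ENNReal.ofReal_pos]; positivity)
    (measure_ball_pos volume 0 one_pos).ne'

lemma volume_pCyl_ne_top {r : ℝ} (hr : 0 ≤ r) (z : ℝ × ESp d) : volume (pCyl d r z) ≠ ⊤ := by
  rw [volume_pCyl hr]
  exact ENNReal.mul_ne_top ENNReal.ofReal_ne_top measure_ball_lt_top.ne

lemma volume_pCyl_scale {K r : ℝ} (hK : 0 ≤ K) (hr : 0 ≤ r) (z z' : ℝ × ESp d) :
    volume (pCyl d (K * r) z') = ENNReal.ofReal (K ^ (d + 2)) * volume (pCyl d r z) := by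
  rw [volume_pCyl (by positivity), volume_pCyl hr, mul_pow,
    ENNReal.ofReal_mul (by positivity), mul_assoc]

lemma pCyl_subset {r r' : ℝ} {z z' : ℝ × ESp d} (h1 : z'.1 ≤ z.1)
    (h2 : z.1 + r ^ 2 ≤ z'.1 + r' ^ 2) (h3 : r + dist z.2 z'.2 ≤ r') :
    pCyl d r z ⊆ pCyl d r' z' := by
  rintro w ⟨ha, hb, hc⟩
  refine ⟨h1.trans ha, hb.trans h2, ?_⟩
  calc dist w.2 z'.2 ≤ dist w.2 z.2 + dist z.2 z'.2 := dist_triangle _ _ _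
    _ ≤ r + dist z.2 z'.2 := by gcongr
    _ ≤ r' := h3

lemma avg_le_hatM (g : ℝ × ESp d → ℝ≥0∞) {ρ : ℝ} {z₀ z : ℝ × ESp d} (hρ : 0 < ρ)
    (hz : z ∈ pCyl d ρ z₀) :
    (volume (pCyl d ρ z₀))⁻¹ * ∫⁻ w in pCyl d ρ z₀, g w ≤ hatM d g z :=
  le_iSup_of_le ρ (le_iSup_of_le hρ (le_iSup_of_le z₀ (le_iSup_of_le hz le_rfl)))

lemma exists_of_lt_hatM {g : ℝ × ESp d → ℝ≥0∞} {z : ℝ × ESp d} {lam : ℝ≥0∞}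
    (h : lam < hatM d g z) :
    ∃ ρ z₀, 0 < ρ ∧ z ∈ pCyl d ρ z₀ ∧
      lam < (volume (pCyl d ρ z₀))⁻¹ * ∫⁻ w in pCyl d ρ z₀, g w := by
  simp only [hatM, lt_iSup_iff] at h
  obtain ⟨ρ, hρ, z₀, hz, hv⟩ := h
  exact ⟨ρ, z₀, hρ, hz, hv⟩

lemma mul_vol_le_of_lt_avg {g : ℝ × ESp d → ℝ≥0∞} {ρ : ℝ} {z₀ : ℝ × ESp d} {lam : ℝ≥0∞}
    (hρ : 0 < ρ)
    (h : lam < (volume (pCyl d ρ z₀))⁻¹ * ∫⁻ w in pCyl d ρ z₀, g w) :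
    lam * volume (pCyl d ρ z₀) ≤ ∫⁻ w in pCyl d ρ z₀, g w := by
  have h1 := (volume_pCyl_pos hρ z₀).ne'
  have h2 := volume_pCyl_ne_top hρ.le z₀
  calc lam * volume (pCyl d ρ z₀)
      ≤ ((volume (pCyl d ρ z₀))⁻¹ * ∫⁻ w in pCyl d ρ z₀, g w) * volume (pCyl d ρ z₀) := by
        exact mul_le_mul_left h.le _
    _ = _ := by
        rw [mul_comm _ (∫⁻ w in pCyl d ρ z₀, g w), mul_assoc, ENNReal.inv_mul_cancel h1 h2,
          mul_one]

/-- Weak (1,1) estimate for the parabolic maximal function, constant `5^(d+2)`. -/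
lemma weak_type (g : ℝ × ESp d → ℝ≥0∞) (hg : Measurable g) (hT : ∫⁻ w, g w ≠ ⊤)
    {lam : ℝ≥0∞} (h0 : lam ≠ 0) (htop : lam ≠ ⊤) :
    volume {w | lam < hatM d g w} ≤
      ENNReal.ofReal (5 ^ (d + 2)) * (∫⁻ w, g w) / lam := by
  set T := ∫⁻ w, g w with hTdef
  -- the family of all cylinders with average `> lam`
  set t : Set (ℝ × (ℝ × ESp d)) := {p | 0 < p.1 ∧
    lam < (volume (pCyl d p.1 p.2))⁻¹ * ∫⁻ w in pCyl d p.1 p.2, g w} with ht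
  have hvol_le : ∀ p ∈ t, volume (pCyl d p.1 p.2) ≤ T / lam := by
    rintro p ⟨hp1, hp2⟩
    rw [ENNReal.le_div_iff_mul_le (Or.inl h0) (Or.inl htop), mul_comm]
    exact (mul_vol_le_of_lt_avg hp1 hp2).trans (setLIntegral_le_lintegral _ _)
  -- radius bound
  have hB0 : volume (ball (0 : ESp d) 1) ≠ 0 := (measure_ball_pos volume 0 one_pos).ne'
  have hBt : volume (ball (0 : ESp d) 1) ≠ ⊤ := measure_ball_lt_top.ne
  set R : ℝ := max 1 ((T / lam / volume (ball (0 : ESp d) 1)).toReal) with hR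
  have hrad : ∀ p ∈ t, p.1 ≤ R := by
    intro p hp
    have h1 : ENNReal.ofReal (p.1 ^ (d + 2)) * volume (ball (0 : ESp d) 1) ≤ T / lam := by
      rw [← volume_pCyl hp.1.le p.2]; exact hvol_le p hp
    have h2 : ENNReal.ofReal (p.1 ^ (d + 2)) ≤ T / lam / volume (ball (0 : ESp d) 1) := by
      rw [ENNReal.le_div_iff_mul_le (Or.inl hB0) (Or.inl hBt)]; exact h1
    have hfin : T / lam / volume (ball (0 : ESp d) 1) ≠ ⊤ := by
      apply (ENNReal.div_lt_top (ENNReal.div_lt_top hT h0).ne hB0).ne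
    have h3 : p.1 ^ (d + 2) ≤ (T / lam / volume (ball (0 : ESp d) 1)).toReal := by
      have := ENNReal.toReal_mono hfin h2
      rwa [ENNReal.toReal_ofReal (pow_nonneg hp.1.le _)] at this
    rcases le_or_gt p.1 1 with h | h
    · exact h.trans (le_max_left _ _)
    · refine le_trans ?_ (le_max_right _ _)
      exact le_trans (le_self_pow₀ h.le (by omega)) h3
  -- Vitali
  obtain ⟨u, hut, hdisj, hcov⟩ := Vitali.exists_disjoint_subfamily_covering_enlargement
    (fun p : ℝ × (ℝ × ESp d) => pCyl d p.1 p.2) t (fun p => p.1) 2 one_lt_two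
    (fun p hp => hp.1.le) R hrad
    (fun p hp => ⟨p.2, by exact ⟨le_refl _, by nlinarith [hp.1.le, sq_nonneg p.1], by
      simp [dist_self, hp.1.le]⟩⟩)
  -- countability of `u`
  have hucnt : u.Countable := by
    have := MeasureTheory.Measure.countable_meas_pos_of_disjoint_iUnion
      (μ := (volume : Measure (ℝ × ESp d)))
      (As := fun b : u => pCyl d b.1.1 b.1.2)
      (fun b => measurableSet_pCyl _ _)
      (fun i j hij => hdisj i.2 j.2 (Subtype.coe_injective.ne hij))
    have heq : { b : u | 0 < volume (pCyl d b.1.1 b.1.2) } = univ := by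
      ext b; simp [volume_pCyl_pos (hut b.2).1 b.1.2]
    rw [heq] at this
    rw [← Set.countable_coe_iff]
    exact countable_univ_iff.mp this
  -- the enlargement of a cylinder
  set big : ℝ × (ℝ × ESp d) → Set (ℝ × ESp d) :=
    fun p => pCyl d (5 * p.1) (p.2.1 - 4 * p.1 ^ 2, p.2.2) with hbig
  -- covering
  have hcover : {w | lam < hatM d g w} ⊆ ⋃ b ∈ u, big b := by
    intro w hw
    obtain ⟨σ, y, hσ, hwy, havg⟩ := exists_of_lt_hatM hw
    have hpt : (σ, y) ∈ t := ⟨hσ, havg⟩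
    obtain ⟨b, hbu, hne, hle⟩ := hcov (σ, y) hpt
    have hb := hut hbu
    refine mem_biUnion hbu ?_
    obtain ⟨v, hv1, hv2⟩ := hne
    have hsub : pCyl d σ y ⊆ big b := by
      apply pCyl_subset
      · -- time lower bound
        simp only
        have := hv1.1; have := hv1.2.1; have := hv2.1; have := hv2.2.1
        nlinarith [hb.1.le, hσ.le, sq_nonneg σ, sq_nonneg b.1]
      · simp only
        have := hv1.1; have := hv1.2.1; have := hv2.1; have := hv2.2.1
        nlinarith [hb.1.le, hσ.le, sq_nonneg σ, sq_nonneg b.1]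
      · simp only
        have h1 : dist y.2 b.2.2 ≤ σ + b.1 := by
          calc dist y.2 b.2.2 ≤ dist y.2 v.2 + dist v.2 b.2.2 := dist_triangle _ _ _
            _ ≤ σ + b.1 := add_le_add (by rw [dist_comm]; exact hv1.2.2) hv2.2.2
        nlinarith [hb.1.le]
    exact hsub hwy
  -- conclusion
  calc volume {w | lam < hatM d g w} ≤ volume (⋃ b ∈ u, big b) := measure_mono hcover
    _ ≤ ∑' b : u, volume (big b) := measure_biUnion_le _ hucnt _
    _ = ∑' b : u, ENNReal.ofReal (5 ^ (d + 2)) * volume (pCyl d b.1.1 b.1.2) := by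
        congr 1; ext b
        exact volume_pCyl_scale (by norm_num) (hut b.2).1.le _ _
    _ ≤ ∑' b : u, ENNReal.ofReal (5 ^ (d + 2)) * ((∫⁻ w in pCyl d b.1.1 b.1.2, g w) / lam) := by
        gcongr with b
        rw [ENNReal.le_div_iff_mul_le (Or.inl h0) (Or.inl htop), mul_comm]
        exact mul_vol_le_of_lt_avg (hut b.2).1 (hut b.2).2
    _ = ENNReal.ofReal (5 ^ (d + 2)) * (∑' b : u, ∫⁻ w in pCyl d b.1.1 b.1.2, g w) / lam := by
        simp only [ENNReal.tsum_mul_left, div_eq_mul_inv, ENNReal.tsum_mul_right, mul_assoc]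
    _ ≤ ENNReal.ofReal (5 ^ (d + 2)) * T / lam := by
        gcongr
        rw [← lintegral_biUnion hucnt (fun b _ => measurableSet_pCyl _ _) hdisj]
        exact setLIntegral_le_lintegral _ _

-- pointwise dyadic bound
lemma pointwise_dyadic {η : ℝ} (hη1 : 0 < η) (hη2 : η < 1) {lam0 : ℝ≥0∞}
    (h0 : lam0 ≠ 0) (ht : lam0 ≠ ⊤) (x : ℝ≥0∞) :
    x ^ η ≤ lam0 ^ η + ∑' n : ℕ,
      (if (2 : ℝ≥0∞) ^ n * lam0 < x then
        ((2:ℝ≥0∞) ^ η) ^ n * ((2:ℝ≥0∞) ^ η - 1) * lam0 ^ η else 0) := by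
  set q : ℝ≥0∞ := (2:ℝ≥0∞) ^ η with hq
  have hq1 : 1 < q := by
    have h := ENNReal.rpow_lt_rpow_of_exponent_lt (x := 2) one_lt_two (by norm_num)
      (y := 0) (z := η) hη1
    simpa using h
  have hqkey : 1 + (q - 1) = q := add_tsub_cancel_of_le hq1.le
  have hgeom : ∀ k : ℕ, lam0 ^ η + ∑ n ∈ Finset.range k, q ^ n * (q - 1) * lam0 ^ η
      = q ^ k * lam0 ^ η := by
    intro k
    induction k with
    | zero => simp
    | succ k ih =>
      rw [Finset.sum_range_succ, ← add_assoc, ih]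
      calc q ^ k * lam0 ^ η + q ^ k * (q - 1) * lam0 ^ η
          = q ^ k * (1 + (q - 1)) * lam0 ^ η := by ring
        _ = q ^ (k + 1) * lam0 ^ η := by rw [hqkey]; ring
  rcases le_or_gt x lam0 with hx | hx
  · exact le_trans (ENNReal.rpow_le_rpow hx hη1.le) le_self_add
  by_cases hex : ∃ n : ℕ, x ≤ (2:ℝ≥0∞) ^ n * lam0
  · -- locate dyadic level
    classical
    let N := Nat.find hex
    have hN : x ≤ (2:ℝ≥0∞) ^ N * lam0 := Nat.find_spec hex
    have hN0 : N ≠ 0 := by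
      intro h
      rw [h] at hN; simp at hN
      exact absurd hN (not_le.mpr hx)
    obtain ⟨M, hM⟩ : ∃ M, N = M + 1 := ⟨N - 1, (Nat.succ_pred_eq_of_pos (Nat.pos_of_ne_zero hN0)).symm⟩
    have hMlt : ∀ n ≤ M, (2:ℝ≥0∞) ^ n * lam0 < x := by
      intro n hn
      have hnN : ¬ x ≤ (2:ℝ≥0∞) ^ n * lam0 := Nat.find_min hex (by omega)
      exact not_le.mp hnN
    calc x ^ η ≤ ((2:ℝ≥0∞) ^ N * lam0) ^ η := ENNReal.rpow_le_rpow hN hη1.le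
      _ = q ^ N * lam0 ^ η := by
          rw [ENNReal.mul_rpow_of_nonneg _ _ hη1.le, ← ENNReal.rpow_natCast 2 N,
            ← ENNReal.rpow_mul, mul_comm (N:ℝ) η, ENNReal.rpow_mul, ENNReal.rpow_natCast]
      _ = lam0 ^ η + ∑ n ∈ Finset.range N, q ^ n * (q - 1) * lam0 ^ η := (hgeom N).symm
      _ ≤ _ := by
          gcongr
          refine le_trans ?_ (ENNReal.sum_le_tsum (Finset.range N))
          apply Finset.sum_le_sum
          intro n hn
          rw [if_pos (hMlt n (by simp [hM] at hn; omega))]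
  · -- x above all levels : RHS is infinite
    push_neg at hex
    have hterm : ∀ n : ℕ, (q - 1) * lam0 ^ η ≤
        (if (2 : ℝ≥0∞) ^ n * lam0 < x then q ^ n * (q - 1) * lam0 ^ η else 0) := by
      intro n
      rw [if_pos (hex n)]
      calc (q - 1) * lam0 ^ η = 1 * ((q - 1) * lam0 ^ η) := (one_mul _).symm
        _ ≤ q ^ n * ((q - 1) * lam0 ^ η) := by gcongr; exact one_le_pow_of_one_le' hq1.le n
        _ = q ^ n * (q - 1) * lam0 ^ η := by ring
    have hsum : (∑' n : ℕ, (if (2 : ℝ≥0∞) ^ n * lam0 < x then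
        q ^ n * (q - 1) * lam0 ^ η else 0)) = ⊤ := by
      rw [eq_top_iff]
      calc (⊤ : ℝ≥0∞) = ∑' _ : ℕ, (q - 1) * lam0 ^ η := by
            rw [ENNReal.tsum_const_eq_top_of_ne_zero]
            apply mul_ne_zero
            · exact (tsub_pos_of_lt hq1).ne'
            · exact (ENNReal.rpow_pos (lt_of_le_of_ne zero_le (Ne.symm h0)) ht).ne'
        _ ≤ _ := ENNReal.tsum_le_tsum hterm
    rw [hsum]
    simp

lemma kolmogorov {α : Type*} [MeasurableSpace α] {μ : Measure α} (f : α → ℝ≥0∞)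
    {C : Set α} (hCm : MeasurableSet C) (hC0 : μ C ≠ 0) (hCt : μ C ≠ ⊤)
    {η : ℝ} (hη1 : 0 < η) (hη2 : η < 1) (AT : ℝ≥0∞)
    (hweak : ∀ lam : ℝ≥0∞, lam ≠ 0 → lam ≠ ⊤ → μ (C ∩ {w | lam < f w}) ≤ AT / lam) :
    ∫⁻ w in C, f w ^ η ∂μ ≤
      (1 + ((2:ℝ≥0∞) ^ η - 1) * (1 - (2:ℝ≥0∞) ^ (η - 1))⁻¹) * (μ C * (AT / μ C) ^ η) := by
  rcases eq_or_ne AT 0 with hAT | hAT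
  · -- trivial case : `f = 0` a.e. on `C`
    have hnull : μ (C ∩ {w | 0 < f w}) = 0 := by
      have hsub : C ∩ {w | 0 < f w} ⊆ ⋃ n : ℕ, C ∩ {w | ((n : ℝ≥0∞) + 1)⁻¹ < f w} := by
        rintro w ⟨hwC, hwf⟩
        obtain ⟨n, hn⟩ := ENNReal.exists_inv_nat_lt (a := f w) hwf.ne'
        exact mem_iUnion.mpr ⟨n, hwC,
          lt_of_le_of_lt (ENNReal.inv_le_inv.mpr le_self_add) hn⟩
      refine measure_mono_null hsub (measure_iUnion_null fun n => ?_)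
      have h1 : ((n : ℝ≥0∞) + 1)⁻¹ ≠ 0 := by
        simp [ENNReal.inv_ne_zero]
      have h2 : ((n : ℝ≥0∞) + 1)⁻¹ ≠ ⊤ := by
        simp
      have h3 := hweak _ h1 h2
      rw [hAT, ENNReal.zero_div] at h3
      exact le_antisymm h3 zero_le
    set S := toMeasurable μ (C ∩ {w | 0 < f w}) with hSdef
    have hSm : MeasurableSet S := measurableSet_toMeasurable _ _
    have hSμ : μ S = 0 := by rw [hSdef, measure_toMeasurable]; exact hnull
    have hbound : ∀ w ∈ C, f w ^ η ≤ S.indicator (fun _ => (⊤:ℝ≥0∞)) w := by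
      intro w hw
      rcases eq_or_ne (f w) 0 with h | h
      · simp [h, ENNReal.zero_rpow_of_pos hη1]
      · have hmem : w ∈ S := subset_toMeasurable _ _ ⟨hw, lt_of_le_of_ne zero_le (Ne.symm h)⟩
        simp [indicator_of_mem hmem]
    calc ∫⁻ w in C, f w ^ η ∂μ
        ≤ ∫⁻ w in C, S.indicator (fun _ => (⊤:ℝ≥0∞)) w ∂μ :=
          lintegral_mono_ae ((ae_restrict_mem hCm).mono hbound)
      _ = ⊤ * (μ.restrict C) S := lintegral_indicator_const hSm _
      _ = 0 := by
          rw [Measure.restrict_apply hSm,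
            measure_mono_null inter_subset_left hSμ, mul_zero]
      _ ≤ _ := zero_le
  rcases eq_or_ne AT ⊤ with hATt | hATt
  · -- RHS is infinite
    rw [hATt, ENNReal.top_div_of_ne_top hCt, ENNReal.top_rpow_of_pos hη1,
      ENNReal.mul_top hC0, ENNReal.mul_top (by simp)]
    exact le_top
  -- main case
  set lam0 : ℝ≥0∞ := AT / μ C with hlam0
  have h00 : lam0 ≠ 0 := by
    simp only [hlam0, ne_eq, ENNReal.div_eq_zero_iff]
    push_neg; exact ⟨hAT, hCt⟩
  have h0t : lam0 ≠ ⊤ := (ENNReal.div_lt_top hATt hC0).ne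
  set q : ℝ≥0∞ := (2:ℝ≥0∞) ^ η with hq
  set S : ℕ → Set α := fun n => toMeasurable μ (C ∩ {w | (2:ℝ≥0∞) ^ n * lam0 < f w}) with hSdef
  have hSm : ∀ n, MeasurableSet (S n) := fun n => measurableSet_toMeasurable _ _
  have hSμ : ∀ n, μ (S n) ≤ AT / ((2:ℝ≥0∞) ^ n * lam0) := by
    intro n
    rw [hSdef]
    rw [measure_toMeasurable]
    exact hweak _ (mul_ne_zero (pow_ne_zero _ (by norm_num)) h00) (ENNReal.mul_ne_top (ENNReal.pow_ne_top (by norm_num)) h0t)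
  have hbound : ∀ w ∈ C, f w ^ η ≤ lam0 ^ η +
      ∑' n : ℕ, (S n).indicator (fun _ => q ^ n * (q - 1) * lam0 ^ η) w := by
    intro w hw
    refine le_trans (pointwise_dyadic hη1 hη2 h00 h0t (f w)) ?_
    gcongr with n
    by_cases hc : (2:ℝ≥0∞) ^ n * lam0 < f w
    · have hmem : w ∈ S n :=
        subset_toMeasurable μ _ (mem_inter hw (by exact hc : w ∈ {w | (2:ℝ≥0∞) ^ n * lam0 < f w}))
      rw [if_pos hc, indicator_of_mem hmem]
    · rw [if_neg hc]; exact zero_le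
  have hr : q * 2⁻¹ = (2:ℝ≥0∞) ^ (η - 1) := by
    rw [hq, ← ENNReal.rpow_neg_one 2, ← ENNReal.rpow_add _ _ (by norm_num) (by norm_num),
      sub_eq_add_neg]
  calc ∫⁻ w in C, f w ^ η ∂μ
      ≤ ∫⁻ w in C, (lam0 ^ η +
          ∑' n : ℕ, (S n).indicator (fun _ => q ^ n * (q - 1) * lam0 ^ η) w) ∂μ :=
        lintegral_mono_ae ((ae_restrict_mem hCm).mono hbound)
    _ = lam0 ^ η * μ C +
        ∑' n : ℕ, (q ^ n * (q - 1) * lam0 ^ η) * μ (S n ∩ C) := by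
        rw [lintegral_add_left measurable_const, setLIntegral_const,
          lintegral_tsum fun n => (measurable_const.indicator (hSm n)).aemeasurable]
        congr 1
        refine tsum_congr fun n => ?_
        rw [lintegral_indicator_const (hSm n), Measure.restrict_apply (hSm n)]
    _ ≤ lam0 ^ η * μ C +
        ∑' n : ℕ, (q ^ n * (q - 1) * lam0 ^ η) * (AT / ((2:ℝ≥0∞) ^ n * lam0)) := by
        gcongr with n
        exact le_trans (measure_mono inter_subset_left) (hSμ n)
    _ = lam0 ^ η * μ C +
        ∑' n : ℕ, ((2:ℝ≥0∞) ^ (η - 1)) ^ n * ((q - 1) * lam0 ^ η * μ C) := by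
        congr 1
        refine tsum_congr fun n => ?_
        have hAT' : AT = lam0 * μ C := (ENNReal.div_mul_cancel hC0 hCt).symm
        rw [hAT', mul_comm lam0 (μ C), mul_comm ((2:ℝ≥0∞) ^ n) lam0]
        rw [show μ C * lam0 / (lam0 * ((2:ℝ≥0∞) ^ n)) = μ C * lam0 * (lam0 * (2:ℝ≥0∞) ^ n)⁻¹
          from rfl]
        rw [ENNReal.mul_inv (Or.inl h00) (Or.inl h0t)]
        rw [← hr]
        have h2n : ((2:ℝ≥0∞) ^ n)⁻¹ = (2⁻¹ : ℝ≥0∞) ^ n := by rw [ENNReal.inv_pow]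
        rw [h2n, mul_pow]
        calc q ^ n * (q - 1) * lam0 ^ η * (μ C * lam0 * (lam0⁻¹ * (2⁻¹:ℝ≥0∞) ^ n))
            = (q ^ n * (2⁻¹:ℝ≥0∞) ^ n) * ((q - 1) * lam0 ^ η * μ C) * (lam0 * lam0⁻¹) := by
              ring
          _ = q ^ n * (2⁻¹:ℝ≥0∞) ^ n * ((q - 1) * lam0 ^ η * μ C) := by
              rw [ENNReal.mul_inv_cancel h00 h0t, mul_one]
    _ = lam0 ^ η * μ C + (1 - (2:ℝ≥0∞) ^ (η - 1))⁻¹ * ((q - 1) * lam0 ^ η * μ C) := by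
        rw [ENNReal.tsum_mul_right, ENNReal.tsum_geometric]
    _ = (1 + (q - 1) * (1 - (2:ℝ≥0∞) ^ (η - 1))⁻¹) * (μ C * lam0 ^ η) := by ring

lemma ennreal_rpow_add_le {η : ℝ} (hη1 : 0 < η) (hη2 : η ≤ 1) (a b : ℝ≥0∞) :
    (a + b) ^ η ≤ a ^ η + b ^ η := by
  have h := ENNReal.rpow_add_rpow_le a b hη1 hη2
  simp only [ENNReal.rpow_one, div_one] at h
  calc (a + b) ^ η ≤ ((a ^ η + b ^ η) ^ (1/η)) ^ η := ENNReal.rpow_le_rpow h hη1.le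
    _ = a ^ η + b ^ η := by
        rw [← ENNReal.rpow_mul, one_div, inv_mul_cancel₀ hη1.ne', ENNReal.rpow_one]

lemma hatM_split (g : ℝ × ESp d → ℝ≥0∞) {ρ : ℝ} {z₀ z w : ℝ × ESp d}
    (hρ : 0 < ρ) (hz : z ∈ pCyl d ρ z₀) (hw : w ∈ pCyl d ρ z₀) :
    hatM d g w ≤ hatM d ((pCyl d (3*ρ) (z₀.1 - ρ^2, z₀.2)).indicator g) w
      + ENNReal.ofReal (3 ^ (d + 2)) * hatM d g z := by
  refine iSup_le fun σ => iSup_le fun hσ => iSup_le fun y => iSup_le fun hwy => ?_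
  by_cases hcase : σ ≤ ρ
  · -- small cylinders live inside the enlargement `Cstar`
    have hsub : pCyl d σ y ⊆ pCyl d (3*ρ) (z₀.1 - ρ^2, z₀.2) := by
      apply pCyl_subset
      · simp only
        have h1 := hwy.1; have h2 := hwy.2.1; have h3 := hw.1
        nlinarith [hσ.le]
      · simp only
        have h1 := hwy.1; have h2 := hw.2.1
        nlinarith [hσ.le, hρ.le]
      · simp only
        have h1 : dist y.2 z₀.2 ≤ σ + ρ := by
          calc dist y.2 z₀.2 ≤ dist y.2 w.2 + dist w.2 z₀.2 := dist_triangle _ _ _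
            _ ≤ σ + ρ := add_le_add (by rw [dist_comm]; exact hwy.2.2) hw.2.2
        nlinarith
    have heq : ∫⁻ v in pCyl d σ y, g v
        = ∫⁻ v in pCyl d σ y, (pCyl d (3*ρ) (z₀.1 - ρ^2, z₀.2)).indicator g v := by
      refine (setLIntegral_congr_fun_ae (measurableSet_pCyl _ _) (ae_of_all _ fun v hv => ?_)).symm
      rw [indicator_of_mem (hsub hv)]
    rw [heq]
    exact le_trans (avg_le_hatM _ hσ hwy) le_self_add
  · push_neg at hcase
    have hσρ : ρ < σ := hcase
    have hc0 : (ENNReal.ofReal ((3:ℝ) ^ (d + 2))) ≠ 0 :=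
      (ENNReal.ofReal_pos.mpr (by positivity)).ne'
    have hct : (ENNReal.ofReal ((3:ℝ) ^ (d + 2))) ≠ ⊤ := ENNReal.ofReal_ne_top
    have hsub : pCyl d σ y ⊆ pCyl d (3*σ) (y.1 - σ^2, y.2) := by
      apply pCyl_subset
      · simp only; nlinarith [sq_nonneg σ]
      · simp only; nlinarith [sq_nonneg σ]
      · simp only [dist_self]; linarith [hσ.le]
    have hzD' : z ∈ pCyl d (3*σ) (y.1 - σ^2, y.2) := by
      have h1 := hz.1; have h2 := hz.2.1
      have h3 := hw.1; have h4 := hw.2.1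
      have h5 := hwy.1; have h6 := hwy.2.1
      refine ⟨?_, ?_, ?_⟩
      · simp only; nlinarith
      · simp only; nlinarith
      · simp only
        calc dist z.2 y.2 ≤ dist z.2 z₀.2 + dist z₀.2 w.2 + dist w.2 y.2 :=
              dist_triangle4 _ _ _ _
          _ ≤ ρ + ρ + σ := by
              refine add_le_add (add_le_add hz.2.2 ?_) hwy.2.2
              rw [dist_comm]; exact hw.2.2
          _ ≤ 3 * σ := by linarith
    have hv : volume (pCyl d (3*σ) (y.1 - σ^2, y.2))
        = ENNReal.ofReal ((3:ℝ) ^ (d + 2)) * volume (pCyl d σ y) :=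
      volume_pCyl_scale (by norm_num) hσ.le y _
    calc (volume (pCyl d σ y))⁻¹ * ∫⁻ v in pCyl d σ y, g v
        ≤ (volume (pCyl d σ y))⁻¹ * ∫⁻ v in pCyl d (3*σ) (y.1 - σ^2, y.2), g v := by
          gcongr
      _ = ENNReal.ofReal ((3:ℝ) ^ (d + 2)) * ((volume (pCyl d (3*σ) (y.1 - σ^2, y.2)))⁻¹ *
            ∫⁻ v in pCyl d (3*σ) (y.1 - σ^2, y.2), g v) := by
          rw [hv, ENNReal.mul_inv (Or.inl hc0) (Or.inl hct), ← mul_assoc, ← mul_assoc,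
            ENNReal.mul_inv_cancel hc0 hct, one_mul]
      _ ≤ ENNReal.ofReal ((3:ℝ) ^ (d + 2)) * hatM d g z := by
          gcongr
          exact avg_le_hatM _ (by positivity) hzD'
      _ ≤ _ := le_add_self

lemma avg_pow_le (g : ℝ × ESp d → ℝ≥0∞) (hg : Measurable g) {η : ℝ}
    (hη1 : 0 < η) (hη2 : η < 1) {ρ : ℝ} {z₀ z : ℝ × ESp d}
    (hρ : 0 < ρ) (hz : z ∈ pCyl d ρ z₀) (hfin : hatM d g z ≠ ⊤) :
    (volume (pCyl d ρ z₀))⁻¹ * ∫⁻ w in pCyl d ρ z₀, (hatM d g w) ^ η ≤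
      ((1 + ((2:ℝ≥0∞) ^ η - 1) * (1 - (2:ℝ≥0∞) ^ (η-1))⁻¹) *
        (ENNReal.ofReal ((5:ℝ) ^ (d+2)) * ENNReal.ofReal ((3:ℝ) ^ (d+2))) ^ η
       + (ENNReal.ofReal ((3:ℝ) ^ (d+2))) ^ η) * (hatM d g z) ^ η := by
  set C : Set (ℝ × ESp d) := pCyl d ρ z₀ with hC
  set Cstar : Set (ℝ × ESp d) := pCyl d (3*ρ) (z₀.1 - ρ^2, z₀.2) with hCstar
  set g1 : ℝ × ESp d → ℝ≥0∞ := Cstar.indicator g with hg1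
  set f : ℝ × ESp d → ℝ≥0∞ := hatM d g1 with hf
  have hCm : MeasurableSet C := measurableSet_pCyl _ _
  have hC0 : volume C ≠ 0 := (volume_pCyl_pos hρ z₀).ne'
  have hCt : volume C ≠ ⊤ := volume_pCyl_ne_top hρ.le z₀
  have hc30 : (ENNReal.ofReal ((3:ℝ) ^ (d + 2))) ≠ 0 :=
    (ENNReal.ofReal_pos.mpr (by positivity)).ne'
  have hc3t : (ENNReal.ofReal ((3:ℝ) ^ (d + 2))) ≠ ⊤ := ENNReal.ofReal_ne_top
  have hCsub : C ⊆ Cstar := by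
    apply pCyl_subset
    · simp only; nlinarith [sq_nonneg ρ]
    · simp only; nlinarith [sq_nonneg ρ]
    · simp only [dist_self]; linarith
  have hzstar : z ∈ Cstar := hCsub hz
  have hvstar : volume Cstar = ENNReal.ofReal ((3:ℝ) ^ (d + 2)) * volume C :=
    volume_pCyl_scale (by norm_num) hρ.le z₀ _
  have hvstar0 : volume Cstar ≠ 0 := by
    rw [hvstar]; exact mul_ne_zero hc30 hC0
  have hvstart : volume Cstar ≠ ⊤ := by
    rw [hvstar]; exact ENNReal.mul_ne_top hc3t hCt
  set T : ℝ≥0∞ := ∫⁻ w, g1 w with hT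
  have hT_le : T ≤ ENNReal.ofReal ((3:ℝ) ^ (d + 2)) * volume C * hatM d g z := by
    have h1 : T = ∫⁻ w in Cstar, g w := by
      rw [hT, hg1, lintegral_indicator (measurableSet_pCyl _ _)]
    calc T = volume Cstar * ((volume Cstar)⁻¹ * T) := by
          rw [← mul_assoc, ENNReal.mul_inv_cancel hvstar0 hvstart, one_mul]
      _ ≤ volume Cstar * hatM d g z := by
          gcongr
          rw [h1]
          exact avg_le_hatM _ (by positivity) hzstar
      _ = _ := by rw [hvstar]
  have hTt : T ≠ ⊤ := by
    refine ne_top_of_le_ne_top ?_ hT_le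
    exact ENNReal.mul_ne_top (ENNReal.mul_ne_top hc3t hCt) hfin
  set AT : ℝ≥0∞ := ENNReal.ofReal ((5:ℝ) ^ (d+2)) * T with hAT
  have hweak : ∀ lam : ℝ≥0∞, lam ≠ 0 → lam ≠ ⊤ →
      volume (C ∩ {w | lam < f w}) ≤ AT / lam := by
    intro lam h0 htop
    refine le_trans (measure_mono inter_subset_right) ?_
    exact weak_type g1 (hg.indicator (measurableSet_pCyl _ _)) hTt h0 htop
  have hkol := kolmogorov f hCm hC0 hCt hη1 hη2 AT hweak
  have hpoint : ∀ w ∈ C, (hatM d g w) ^ η ≤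
      f w ^ η + (ENNReal.ofReal ((3:ℝ) ^ (d+2)) * hatM d g z) ^ η := by
    intro w hw
    refine le_trans (ENNReal.rpow_le_rpow (hatM_split g hρ hz hw) hη1.le) ?_
    exact ennreal_rpow_add_le hη1 hη2.le _ _
  have hint : ∫⁻ w in C, (hatM d g w) ^ η ≤
      (∫⁻ w in C, f w ^ η) + (ENNReal.ofReal ((3:ℝ) ^ (d+2)) * hatM d g z) ^ η * volume C := by
    calc ∫⁻ w in C, (hatM d g w) ^ η
        ≤ ∫⁻ w in C, (f w ^ η + (ENNReal.ofReal ((3:ℝ) ^ (d+2)) * hatM d g z) ^ η) :=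
          lintegral_mono_ae ((ae_restrict_mem hCm).mono hpoint)
      _ = _ := by rw [lintegral_add_right _ measurable_const, setLIntegral_const]
  have hATdiv : AT / volume C ≤
      ENNReal.ofReal ((5:ℝ) ^ (d+2)) * ENNReal.ofReal ((3:ℝ) ^ (d+2)) * hatM d g z := by
    calc AT / volume C
        ≤ (ENNReal.ofReal ((5:ℝ) ^ (d+2)) * ENNReal.ofReal ((3:ℝ) ^ (d+2)) * hatM d g z
            * volume C) / volume C := by
          gcongr
          rw [hAT]
          calc ENNReal.ofReal ((5:ℝ) ^ (d+2)) * T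
              ≤ ENNReal.ofReal ((5:ℝ) ^ (d+2)) *
                (ENNReal.ofReal ((3:ℝ) ^ (d + 2)) * volume C * hatM d g z) := by gcongr
            _ = _ := by ring
      _ = _ := by
          rw [mul_div_assoc, ENNReal.div_self hC0 hCt, mul_one]
  set cη : ℝ≥0∞ := 1 + ((2:ℝ≥0∞) ^ η - 1) * (1 - (2:ℝ≥0∞) ^ (η-1))⁻¹ with hcη
  calc (volume C)⁻¹ * ∫⁻ w in C, (hatM d g w) ^ η
      ≤ (volume C)⁻¹ * ((cη * (volume C * (AT / volume C) ^ η)) +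
          (ENNReal.ofReal ((3:ℝ) ^ (d+2)) * hatM d g z) ^ η * volume C) := by
        gcongr
        exact le_trans hint (by gcongr)
    _ = cη * (AT / volume C) ^ η + (ENNReal.ofReal ((3:ℝ) ^ (d+2)) * hatM d g z) ^ η := by
        rw [mul_add]
        congr 1
        · rw [show (volume C)⁻¹ * (cη * (volume C * (AT / volume C) ^ η))
              = ((volume C)⁻¹ * volume C) * (cη * (AT / volume C) ^ η) from by ring,
            ENNReal.inv_mul_cancel hC0 hCt, one_mul]
        · rw [show (volume C)⁻¹ * ((ENNReal.ofReal ((3:ℝ) ^ (d+2)) * hatM d g z) ^ η * volume C)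
              = ((volume C)⁻¹ * volume C) * (ENNReal.ofReal ((3:ℝ) ^ (d+2)) * hatM d g z) ^ η
              from by ring,
            ENNReal.inv_mul_cancel hC0 hCt, one_mul]
    _ ≤ cη * (ENNReal.ofReal ((5:ℝ) ^ (d+2)) * ENNReal.ofReal ((3:ℝ) ^ (d+2)) * hatM d g z) ^ η
        + (ENNReal.ofReal ((3:ℝ) ^ (d+2)) * hatM d g z) ^ η := by
        have := ENNReal.rpow_le_rpow hATdiv hη1.le
        gcongr
    _ = _ := by
        rw [ENNReal.mul_rpow_of_nonneg _ _ hη1.le, ENNReal.mul_rpow_of_nonneg _ _ hη1.le,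
          ENNReal.mul_rpow_of_nonneg _ _ hη1.le]
        ring


/-- self-improvement of the maximal function: for `0 < η < 1`,
`M̂[(M̂h)^η] ≤ C (M̂h)^η` pointwise, provided `M̂h` is finite everywhere. -/
theorem hatM_pow_self_improving (d : ℕ) (hd : 1 ≤ d) (η : ℝ) (hη1 : 0 < η) (hη2 : η < 1) :
    ∃ C : ℝ, 0 < C ∧ ∀ h : ℝ × ESp d → ℝ, Measurable h →
      (∀ z : ℝ × ESp d, hatM d (fun w => (‖h w‖₊ : ℝ≥0∞)) z ≠ ⊤) →
      ∀ z : ℝ × ESp d,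
        hatM d (fun w => (hatM d (fun w' => (‖h w'‖₊ : ℝ≥0∞)) w) ^ η) z ≤
          ENNReal.ofReal C * (hatM d (fun w => (‖h w‖₊ : ℝ≥0∞)) z) ^ η := by
  set Kc : ℝ≥0∞ := (1 + ((2:ℝ≥0∞) ^ η - 1) * (1 - (2:ℝ≥0∞) ^ (η-1))⁻¹) *
        (ENNReal.ofReal ((5:ℝ) ^ (d+2)) * ENNReal.ofReal ((3:ℝ) ^ (d+2))) ^ η
       + (ENNReal.ofReal ((3:ℝ) ^ (d+2))) ^ η with hKc
  have hr1 : (2:ℝ≥0∞) ^ (η - 1) < 1 := by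
    have := ENNReal.rpow_lt_rpow_of_exponent_lt (x := 2) one_lt_two (by norm_num)
      (y := η - 1) (z := 0) (by linarith)
    simpa using this
  have hKt : Kc ≠ ⊤ := by
    rw [hKc]
    apply ENNReal.add_ne_top.mpr
    constructor
    · apply ENNReal.mul_ne_top
      · apply ENNReal.add_ne_top.mpr
        refine ⟨ENNReal.one_ne_top, ENNReal.mul_ne_top ?_ ?_⟩
        · exact ne_top_of_le_ne_top
            (ENNReal.rpow_ne_top_of_nonneg hη1.le (by norm_num)) tsub_le_self
        · exact ENNReal.inv_ne_top.mpr (tsub_pos_of_lt hr1).ne'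
      · exact ENNReal.rpow_ne_top_of_nonneg hη1.le
          (ENNReal.mul_ne_top ENNReal.ofReal_ne_top ENNReal.ofReal_ne_top)
    · exact ENNReal.rpow_ne_top_of_nonneg hη1.le ENNReal.ofReal_ne_top
  have hKle : Kc ≤ ENNReal.ofReal (Kc.toReal + 1) := by
    conv_lhs => rw [← ENNReal.ofReal_toReal hKt]
    exact ENNReal.ofReal_le_ofReal (by linarith [ENNReal.toReal_nonneg (a := Kc)])
  refine ⟨Kc.toReal + 1, by linarith [ENNReal.toReal_nonneg (a := Kc)], fun h hmeas hfin z => ?_⟩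
  have hgm : Measurable fun w => ((‖h w‖₊ : ℝ≥0∞)) := hmeas.nnnorm.coe_nnreal_ennreal
  refine iSup_le fun ρ => iSup_le fun hρ => iSup_le fun z₀ => iSup_le fun hz => ?_
  calc (volume (pCyl d ρ z₀))⁻¹ *
        ∫⁻ w in pCyl d ρ z₀, (hatM d (fun w' => (‖h w'‖₊ : ℝ≥0∞)) w) ^ η
      ≤ Kc * (hatM d (fun w => (‖h w‖₊ : ℝ≥0∞)) z) ^ η :=
        avg_pow_le _ hgm hη1 hη2 hρ hz (hfin z)
    _ ≤ _ := by gcongr
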